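/- Let f be a holomorphic self-map of the unit disk D without fixed points such that s^f(z_0) = 0 for some z_0 ∈ D. Then lim_{n→∞} ω(f^n(z), f^n(w)) = 0 for all z, w ∈ D. -/

import Mathlib

/-
Write `ρ(x, y) = ‖(y - x) / (1 - x̄ y)‖` for the pseudo-hyperbolic distance, so that `ω = artanh ρ`,
and let `Zₙ = fⁿ z₀`, `sₙ = ρ(Zₙ, Zₙ₊₁)` and `rₙ = ρ(Zₙ, fⁿ w)`. By Schwarz–Pick `rₙ` decreases to
some `r∞`. For `m ≤ N`, conjugate `f^(N-m)` by disk automorphisms sending `Zₘ` and `Z_N` to `0`;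
Schwarz–Pick applied to the Schwarz quotient `g(ζ)/ζ` of the resulting map `g`, a holomorphic map
into the closed disk, gives `s_N ≥ sₘ (r_N / rₘ - ρ(aₘ, qₘ))` with `‖aₘ‖ = rₘ` and `‖qₘ‖ = sₘ`.
If `r∞ > 0` the bracket tends to `1 - r∞ > 0` as `m → ∞`, and `sₘ > 0` because `f` has no fixed
points, so `s_N` would stay away from `0`. Hence `rₙ → 0` for every `w`, and the claim follows from
`ρ(x, y) ≤ (ρ(c, x) + ρ(c, y)) / (1 - ρ(c, x) ρ(c, y))` with `c = Zₙ`.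
-/

open Complex Metric Filter Set

/-- Inverse hyperbolic tangent. -/
noncomputable def artanh (t : ℝ) : ℝ := (1/2) * Real.log ((1 + t) / (1 - t))

/-- Poincaré distance on the unit disk. -/
noncomputable def pd (z w : ℂ) : ℝ :=
  artanh (‖(w - z) / (1 - (starRingEnd ℂ) z * w)‖)

/-- Holomorphic self-map of the unit disk. -/
def HolSelfDisk (f : ℂ → ℂ) : Prop :=
  DifferentiableOn ℂ f (ball (0:ℂ) 1) ∧ MapsTo f (ball (0:ℂ) 1) (ball (0:ℂ) 1)

/-- A pair of maps that are mutually inverse holomorphic self-maps of the disk,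
i.e. an automorphism of the disk together with its inverse. -/
def IsDiskAutPair (γ γinv : ℂ → ℂ) : Prop :=
  HolSelfDisk γ ∧ HolSelfDisk γinv ∧
  (∀ z ∈ ball (0:ℂ) 1, γinv (γ z) = z) ∧ (∀ z ∈ ball (0:ℂ) 1, γ (γinv z) = z)

open ComplexConjugate Topology

noncomputable def mobius (a z : ℂ) : ℂ := (z - a) / (1 - conj a * z)

lemma pd_eq_artanh_norm_mobius (z w : ℂ) : pd z w = artanh ‖mobius z w‖ := rfl

section Mobius

variable {a z : ℂ}

lemma one_sub_conj_mul_ne_zero (ha : ‖a‖ < 1) (hz : ‖z‖ ≤ 1) : 1 - conj a * z ≠ 0 := by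
  intro h
  have h1 : ‖conj a * z‖ = 1 := by rw [← sub_eq_zero.1 h, norm_one]
  rw [norm_mul, Complex.norm_conj] at h1
  nlinarith [norm_nonneg a, norm_nonneg z]

lemma sq_norm_one_sub_conj_mul_sub_sq_norm_sub (a z : ℂ) :
    ‖1 - conj a * z‖ ^ 2 - ‖z - a‖ ^ 2 = (1 - ‖a‖ ^ 2) * (1 - ‖z‖ ^ 2) := by
  apply Complex.ofReal_injective
  simp only [Complex.ofReal_sub, Complex.ofReal_mul, Complex.ofReal_one, Complex.ofReal_pow,
    ← Complex.conj_mul', map_sub, map_mul, map_one, Complex.conj_conj]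
  ring

lemma norm_mobius_lt_one (ha : ‖a‖ < 1) (hz : ‖z‖ < 1) : ‖mobius a z‖ < 1 := by
  have hden := one_sub_conj_mul_ne_zero ha hz.le
  rw [mobius, norm_div, div_lt_one (norm_pos_iff.2 hden)]
  have := sq_norm_one_sub_conj_mul_sub_sq_norm_sub a z
  have hpos : 0 < (1 - ‖a‖ ^ 2) * (1 - ‖z‖ ^ 2) := by
    apply mul_pos <;> nlinarith [norm_nonneg a, norm_nonneg z]
  exact lt_of_pow_lt_pow_left₀ 2 (norm_nonneg _) (by linarith)

@[simp] lemma mobius_self (a : ℂ) : mobius a a = 0 := by simp [mobius]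

@[simp] lemma mobius_neg_zero (a : ℂ) : mobius (-a) 0 = a := by simp [mobius]

lemma mobius_neg_mobius (ha : ‖a‖ < 1) (hz : ‖z‖ < 1) : mobius (-a) (mobius a z) = z := by
  have h1 := one_sub_conj_mul_ne_zero ha hz.le
  have h2 : 1 - a * conj a ≠ 0 := by
    rw [mul_comm]; exact one_sub_conj_mul_ne_zero ha ha.le
  have e : 1 - conj (-a) * ((z - a) / (1 - conj a * z)) =
      (1 - a * conj a) / (1 - conj a * z) := by
    rw [map_neg, eq_div_iff h1, sub_mul, neg_mul, neg_mul, mul_assoc, div_mul_cancel₀ _ h1]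
    ring
  rw [mobius, mobius, e, sub_neg_eq_add, div_add' _ _ _ h1, div_div_div_cancel_right₀ h1,
    div_eq_iff h2]
  ring

lemma norm_mobius_le_add_div {u v : ℂ} (h : ‖u‖ * ‖v‖ < 1) :
    ‖mobius u v‖ ≤ (‖u‖ + ‖v‖) / (1 - ‖u‖ * ‖v‖) := by
  rw [mobius, norm_div]
  refine div_le_div₀ (by positivity) ((norm_sub_le v u).trans_eq (add_comm _ _))
    (sub_pos.2 h) ?_
  simpa [norm_mul] using norm_sub_norm_le (1 : ℂ) (conj u * v)

lemma differentiableOn_mobius (ha : ‖a‖ < 1) : DifferentiableOn ℂ (mobius a) (ball 0 1) :=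
  DifferentiableOn.div (by fun_prop) (by fun_prop) fun z hz =>
    one_sub_conj_mul_ne_zero ha (mem_ball_zero_iff.1 hz).le

lemma holSelfDisk_mobius (ha : ‖a‖ < 1) : HolSelfDisk (mobius a) :=
  ⟨differentiableOn_mobius ha, fun _ hz =>
    mem_ball_zero_iff.2 (norm_mobius_lt_one ha (mem_ball_zero_iff.1 hz))⟩

end Mobius

namespace HolSelfDisk

variable {f g : ℂ → ℂ}

lemma comp (hg : HolSelfDisk g) (hf : HolSelfDisk f) : HolSelfDisk (g ∘ f) :=
  ⟨hg.1.comp hf.1 hf.2, hg.2.comp hf.2⟩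

lemma iterate (hf : HolSelfDisk f) (n : ℕ) : HolSelfDisk f^[n] :=
  ⟨hf.1.iterate hf.2 n, hf.2.iterate n⟩

lemma norm_lt_one (hf : HolSelfDisk f) {z : ℂ} (hz : ‖z‖ < 1) : ‖f z‖ < 1 :=
  mem_ball_zero_iff.1 (hf.2 (mem_ball_zero_iff.2 hz))

lemma mobius_conj {x : ℂ} (hf : HolSelfDisk f) (hx : ‖x‖ < 1) :
    HolSelfDisk (mobius (f x) ∘ f ∘ mobius (-x)) ∧ (mobius (f x) ∘ f ∘ mobius (-x)) 0 = 0 ∧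
      ∀ y, ‖y‖ < 1 → (mobius (f x) ∘ f ∘ mobius (-x)) (mobius x y) = mobius (f x) (f y) := by
  refine ⟨(holSelfDisk_mobius (hf.norm_lt_one hx)).comp
    (hf.comp (holSelfDisk_mobius (by rwa [norm_neg]))), by simp, fun y hy => ?_⟩
  simp [mobius_neg_mobius hx hy]

theorem norm_mobius_le (hf : HolSelfDisk f) {x y : ℂ} (hx : ‖x‖ < 1) (hy : ‖y‖ < 1) :
    ‖mobius (f x) (f y)‖ ≤ ‖mobius x y‖ := by
  obtain ⟨hg, hg0, hgm⟩ := hf.mobius_conj hx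
  rw [← hgm y hy]
  exact Complex.norm_le_norm_of_mapsTo_ball hg.1 (hg.2.mono_right ball_subset_closedBall) hg0
    (norm_mobius_lt_one hx hy)

end HolSelfDisk

lemma norm_mobius_le_triangle {c x y : ℂ} (hc : ‖c‖ < 1) (hx : ‖x‖ < 1) (hy : ‖y‖ < 1) :
    ‖mobius x y‖ ≤
      (‖mobius c x‖ + ‖mobius c y‖) / (1 - ‖mobius c x‖ * ‖mobius c y‖) := by
  have hcx := norm_mobius_lt_one hc hx
  have hcy := norm_mobius_lt_one hc hy
  have hinv := (holSelfDisk_mobius (a := -c) (by rwa [norm_neg])).norm_mobius_le hcx hcy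
  rw [mobius_neg_mobius hc hx, mobius_neg_mobius hc hy] at hinv
  exact hinv.trans
    (norm_mobius_le_add_div (mul_lt_one_of_nonneg_of_lt_one_left (norm_nonneg _) hcx hcy.le))

theorem norm_sub_le_norm_mobius_mul {φ : ℂ → ℂ} (hd : DifferentiableOn ℂ φ (ball 0 1))
    (hm : MapsTo φ (ball 0 1) (closedBall 0 1)) {x y : ℂ} (hx : ‖x‖ < 1) (hy : ‖y‖ < 1) :
    ‖φ y - φ x‖ ≤ ‖mobius x y‖ * ‖1 - conj (φ x) * φ y‖ := by
  -- For `c < 1` the map `c φ` is a self-map of the open disk; let `c → 1`.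
  have hscaled : ∀ c ∈ Ico (0 : ℝ) 1,
      c * ‖φ y - φ x‖ ≤ ‖mobius x y‖ * ‖1 - conj ((c : ℂ) * φ x) * ((c : ℂ) * φ y)‖ := by
    intro c hc
    have hψ : HolSelfDisk (fun z => (c : ℂ) * φ z) := by
      refine ⟨hd.const_mul _, fun z hz => mem_ball_zero_iff.2 ?_⟩
      rw [norm_mul, Complex.norm_real, Real.norm_of_nonneg hc.1]
      calc c * ‖φ z‖ ≤ c * 1 :=
            mul_le_mul_of_nonneg_left (mem_closedBall_zero_iff.1 (hm hz)) hc.1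
        _ < 1 := by linarith [hc.2]
    have hsp := hψ.norm_mobius_le hx hy
    rw [mobius, norm_div, div_le_iff₀ (norm_pos_iff.2 (one_sub_conj_mul_ne_zero
      (hψ.norm_lt_one hx) (hψ.norm_lt_one hy).le)), ← mul_sub, norm_mul, Complex.norm_real,
      Real.norm_of_nonneg hc.1] at hsp
    exact hsp
  have hclosed : IsClosed {c : ℝ |
      c * ‖φ y - φ x‖ ≤ ‖mobius x y‖ * ‖1 - conj ((c : ℂ) * φ x) * ((c : ℂ) * φ y)‖} :=
    isClosed_le (by fun_prop) (by fun_prop)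
  have h1 : (1 : ℝ) ∈ closure (Ico 0 1) := by
    rw [closure_Ico zero_ne_one]; exact right_mem_Icc.2 zero_le_one
  simpa using hclosed.closure_subset_iff.2 hscaled h1

lemma sub_le_norm_of_norm_sub_le_mul {p c : ℂ} {k : ℝ} (hc : ‖c‖ ≤ 1) (hk0 : 0 ≤ k)
    (hk1 : k < 1) (h : ‖p - c‖ ≤ k * ‖1 - conj c * p‖) : ‖c‖ - k ≤ ‖p‖ := by
  rcases le_or_gt ‖c‖ k with hck | hck
  · linarith [norm_nonneg p]
  have hden : ‖1 - conj c * p‖ ≤ (1 - ‖c‖ ^ 2) + ‖c‖ * ‖p - c‖ := by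
    have e : 1 - conj c * p = ((1 - ‖c‖ ^ 2 : ℝ) : ℂ) + conj c * (c - p) := by
      push_cast; rw [← Complex.conj_mul']; ring
    rw [e]
    refine (norm_add_le _ _).trans_eq ?_
    rw [Complex.norm_real, Real.norm_of_nonneg (by nlinarith [norm_nonneg c]), norm_mul,
      Complex.norm_conj, norm_sub_rev]
  have hpc : ‖p - c‖ ≤ k := by
    have hd := h.trans (mul_le_mul_of_nonneg_left hden hk0)
    by_contra! hlt
    nlinarith [mul_pos (sub_pos.2 hlt) (by nlinarith : 0 < 1 - k * ‖c‖),
      mul_le_mul_of_nonneg_left hck.le hk0]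
  linarith [norm_sub_norm_le c p, norm_sub_rev p c]

namespace HolSelfDisk

variable {f : ℂ → ℂ}

/-- Schwarz–Pick for the Schwarz quotient of `mobius (f x) ∘ f ∘ mobius (-x)`, at the points
`mobius x y` and `mobius x z`. -/
theorem norm_mobius_ge (hf : HolSelfDisk f) {x y z : ℂ} (hx : ‖x‖ < 1) (hy : ‖y‖ < 1)
    (hz : ‖z‖ < 1) :
    ‖mobius x z‖ * (‖mobius (f x) (f y)‖ / ‖mobius x y‖ - ‖mobius (mobius x y) (mobius x z)‖)
      ≤ ‖mobius (f x) (f z)‖ := by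
  obtain ⟨hg, hg0, hgm⟩ := hf.mobius_conj hx
  set g := mobius (f x) ∘ f ∘ mobius (-x)
  set a := mobius x y
  set q := mobius x z
  have ha : ‖a‖ < 1 := norm_mobius_lt_one hx hy
  have hq : ‖q‖ < 1 := norm_mobius_lt_one hx hz
  have hφd : DifferentiableOn ℂ (dslope g 0) (ball 0 1) :=
    (Complex.differentiableOn_dslope (ball_mem_nhds 0 one_pos)).2 hg.1
  have hφm : MapsTo (dslope g 0) (ball 0 1) (closedBall 0 1) := fun ζ hζ => by
    simpa using Complex.norm_dslope_le_div_of_mapsTo_ball hg.1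
      (by rw [hg0]; exact hg.2.mono_right ball_subset_closedBall) hζ
  have hga : ‖g a‖ / ‖a‖ ≤ ‖dslope g 0 a‖ := by
    rcases eq_or_ne a 0 with h | h
    · simp [h]
    · rw [dslope_of_ne _ h, slope_def_field, hg0, sub_zero, sub_zero, norm_div]
  have hgq : ‖g q‖ = ‖q‖ * ‖dslope g 0 q‖ := by
    have := sub_smul_dslope g 0 q
    rw [sub_zero, hg0, sub_zero, smul_eq_mul] at this
    rw [← this, norm_mul]
  have hlow : ‖dslope g 0 a‖ - ‖mobius a q‖ ≤ ‖dslope g 0 q‖ :=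
    sub_le_norm_of_norm_sub_le_mul (mem_closedBall_zero_iff.1 (hφm (mem_ball_zero_iff.2 ha)))
      (norm_nonneg _) (norm_mobius_lt_one ha hq) (norm_sub_le_norm_mobius_mul hφd hφm ha hq)
  rw [← hgm y hy, ← hgm z hz, hgq]
  exact mul_le_mul_of_nonneg_left (by linarith) (norm_nonneg _)

theorem tendsto_norm_mobius_iterate (hf : HolSelfDisk f)
    (hfix : ∀ z ∈ ball (0 : ℂ) 1, f z ≠ z) {z₀ w : ℂ} (hz₀ : ‖z₀‖ < 1) (hw : ‖w‖ < 1)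
    (hstep : Tendsto (fun n => ‖mobius (f^[n] z₀) (f^[n + 1] z₀)‖) atTop (𝓝 0)) :
    Tendsto (fun n => ‖mobius (f^[n] z₀) (f^[n] w)‖) atTop (𝓝 0) := by
  set r := fun n => ‖mobius (f^[n] z₀) (f^[n] w)‖ with hr_def
  set s := fun n => ‖mobius (f^[n] z₀) (f^[n + 1] z₀)‖
  have hZ n : ‖f^[n] z₀‖ < 1 := (hf.iterate n).norm_lt_one hz₀
  have hW n : ‖f^[n] w‖ < 1 := (hf.iterate n).norm_lt_one hw
  have hr_anti : Antitone r := antitone_nat_of_succ_le fun n => by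
    simpa only [hr_def, Function.iterate_succ_apply'] using hf.norm_mobius_le (hZ n) (hW n)
  have hbdd : BddBelow (range r) := ⟨0, by rintro _ ⟨n, rfl⟩; exact norm_nonneg _⟩
  set ρ := ⨅ n, r n
  have hr_lim : Tendsto r atTop (𝓝 ρ) := tendsto_atTop_ciInf hr_anti hbdd
  rcases (le_ciInf fun n => norm_nonneg _ : 0 ≤ ρ).eq_or_lt with hρ | hρ
  · rwa [hρ]
  exfalso
  have hρ_le n : ρ ≤ r n := ciInf_le hbdd n
  have hρ1 : ρ < 1 := (hρ_le 0).trans_lt (norm_mobius_lt_one (hZ 0) (hW 0))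
  have hgrowth m N (hmN : m ≤ N) :
      s m * (ρ / r m - (r m + s m) / (1 - r m * s m)) ≤ s N := by
    obtain ⟨k, rfl⟩ := Nat.exists_eq_add_of_le' hmN
    have h := (hf.iterate k).norm_mobius_ge (hZ m) (hW m) (hZ (m + 1))
    simp only [← Function.iterate_add_apply, ← add_assoc] at h
    have hk : ‖mobius (mobius (f^[m] z₀) (f^[m] w)) (mobius (f^[m] z₀) (f^[m + 1] z₀))‖
        ≤ (r m + s m) / (1 - r m * s m) :=
      norm_mobius_le_add_div (mul_lt_one_of_nonneg_of_lt_one_left (norm_nonneg _)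
        (norm_mobius_lt_one (hZ m) (hW m)) (norm_mobius_lt_one (hZ m) (hZ (m + 1))).le)
    have hv : ρ / r m ≤ r (k + m) / r m := div_le_div_of_nonneg_right (hρ_le _) (norm_nonneg _)
    exact (mul_le_mul_of_nonneg_left (by linarith) (norm_nonneg _)).trans h
  have hcoef : Tendsto (fun m => ρ / r m - (r m + s m) / (1 - r m * s m)) atTop
      (𝓝 (1 - ρ)) := by
    have := ((tendsto_const_nhds (x := ρ)).div hr_lim hρ.ne').sub
      ((hr_lim.add hstep).div (tendsto_const_nhds.sub (hr_lim.mul hstep))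
        (by simp : (1 : ℝ) - ρ * 0 ≠ 0))
    simpa [div_self (show ρ ≠ 0 from hρ.ne')] using this
  obtain ⟨m, hm⟩ := (hcoef.eventually (lt_mem_nhds (sub_pos.2 hρ1))).exists
  have hs_pos : 0 < s m := by
    refine norm_pos_iff.2 (div_ne_zero (sub_ne_zero.2 ?_)
      (one_sub_conj_mul_ne_zero (hZ m) (hZ (m + 1)).le))
    rw [Function.iterate_succ_apply']
    exact hfix _ (mem_ball_zero_iff.2 (hZ m))
  exact (mul_pos hs_pos hm).not_ge (ge_of_tendsto hstep (eventually_atTop.2 ⟨m, hgrowth m⟩))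

end HolSelfDisk

lemma le_two_mul_artanh {t : ℝ} (h0 : 0 ≤ t) (h1 : t < 1) : t ≤ 2 * artanh t := by
  have hlog := Real.one_sub_inv_le_log_of_pos (x := (1 + t) / (1 - t)) (by
    apply div_pos <;> linarith)
  rw [inv_div, one_sub_div (by linarith)] at hlog
  rw [artanh]
  have : t ≤ (1 + t - (1 - t)) / (1 + t) := by
    rw [le_div_iff₀ (by linarith)]; nlinarith
  linarith

lemma tendsto_pd_nhds_zero_iff {ι : Type*} {l : Filter ι} {x y : ι → ℂ}
    (hx : ∀ i, ‖x i‖ < 1) (hy : ∀ i, ‖y i‖ < 1) :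
    Tendsto (fun i => pd (x i) (y i)) l (𝓝 0) ↔
      Tendsto (fun i => ‖mobius (x i) (y i)‖) l (𝓝 0) := by
  simp only [pd_eq_artanh_norm_mobius]
  constructor
  · intro h
    exact squeeze_zero (fun i => norm_nonneg _) (fun i => le_two_mul_artanh (norm_nonneg _)
      (norm_mobius_lt_one (hx i) (hy i))) (by simpa using h.const_mul 2)
  · intro h
    have hcont : ContinuousAt artanh 0 := by
      unfold artanh
      fun_prop (disch := norm_num)
    have h0 : artanh 0 = 0 := by simp [artanh]
    simpa [Function.comp_def, h0] using hcont.tendsto.comp h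

theorem stmt10 (f : ℂ → ℂ) (hf : HolSelfDisk f)
    (hfix : ∀ z ∈ ball (0:ℂ) 1, f z ≠ z)
    (z₀ : ℂ) (hz₀ : z₀ ∈ ball (0:ℂ) 1)
    (hstep : Tendsto (fun n => pd (f^[n] z₀) (f^[n+1] z₀)) atTop (nhds 0)) :
    ∀ z ∈ ball (0:ℂ) 1, ∀ w ∈ ball (0:ℂ) 1,
      Tendsto (fun n => pd (f^[n] z) (f^[n] w)) atTop (nhds 0) := by
  intro z hz w hw
  rw [mem_ball_zero_iff] at hz₀ hz hw
  have horbit {x : ℂ} (hx : ‖x‖ < 1) n : ‖f^[n] x‖ < 1 := (hf.iterate n).norm_lt_one hx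
  have hs := (tendsto_pd_nhds_zero_iff (horbit hz₀) (fun n => horbit hz₀ (n + 1))).1 hstep
  have hZz := hf.tendsto_norm_mobius_iterate hfix hz₀ hz hs
  have hZw := hf.tendsto_norm_mobius_iterate hfix hz₀ hw hs
  rw [tendsto_pd_nhds_zero_iff (horbit hz) (horbit hw)]
  have hbound := (hZz.add hZw).div (tendsto_const_nhds.sub (hZz.mul hZw))
    (by simp : (1 : ℝ) - 0 * 0 ≠ 0)
  rw [add_zero, mul_zero, sub_zero, zero_div] at hbound
  exact squeeze_zero (fun n => norm_nonneg _)
    (fun n => norm_mobius_le_triangle (horbit hz₀ n) (horbit hz n) (horbit hw n)) hbound
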